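/- Sharpening with η ∈ (0,1) does not increase Shannon entropy: if l ∈ R^c is a positive probability vector and η ∈ (0,1), then H(Sharpen(l, η)) ≤ H(l), where H(p) = −Σ_k p_k log p_k. -/

import Mathlib

/-!
Sharpening `l` to `q ∝ l ^ β` with `β = 1 / η ≥ 1` moves mass towards the likelier outcomes.
Gibbs' inequality bounds `H(q)` by the cross entropy `-∑ q log l`, and since the likelihood
ratio `q / l ∝ l ^ (β - 1)` increases together with `log l`, Chebyshev's sum inequality gives
`∑ q log l ≥ ∑ l log l`, i.e. the cross entropy is at most `H(l)`.
-/

open Finset Real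

variable {ι : Type*} [Fintype ι]

theorem sum_mul_log_le_sum_mul_log {p q : ι → ℝ} (hp : ∀ i, 0 < p i) (hq : ∀ i, 0 < q i)
    (hpq : ∑ i, p i ≤ ∑ i, q i) : ∑ i, q i * log (p i) ≤ ∑ i, q i * log (q i) := by
  have termwise : ∀ i, q i * log (p i) - q i * log (q i) ≤ p i - q i := fun i => by
    have hlog := log_le_sub_one_of_pos (div_pos (hp i) (hq i))
    rw [log_div (hp i).ne' (hq i).ne'] at hlog
    calc q i * log (p i) - q i * log (q i) = q i * (log (p i) - log (q i)) := by ring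
      _ ≤ q i * (p i / q i - 1) := mul_le_mul_of_nonneg_left hlog (hq i).le
      _ = p i - q i := by rw [mul_sub, mul_div_cancel₀ _ (hq i).ne', mul_one]
  have := sum_le_sum fun i (_ : i ∈ univ) => termwise i
  rw [sum_sub_distrib, sum_sub_distrib] at this
  linarith

theorem Monovary.weighted_sum_mul_sum_le_sum_mul_sum {w f g : ι → ℝ} (hw : ∀ i, 0 ≤ w i)
    (hfg : Monovary f g) :
    (∑ i, w i * f i) * ∑ i, w i * g i ≤ (∑ i, w i) * ∑ i, w i * f i * g i := by
  have hpairs : 0 ≤ ∑ i, ∑ j, w i * w j * ((f j - f i) * (g j - g i)) :=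
    sum_nonneg fun i _ => sum_nonneg fun j _ =>
      mul_nonneg (mul_nonneg (hw i) (hw j)) (hfg.sub_mul_sub_nonneg i j)
  have hexpand : ∑ i, ∑ j, w i * w j * ((f j - f i) * (g j - g i)) =
      2 * ((∑ i, w i) * ∑ i, w i * f i * g i - (∑ i, w i * f i) * ∑ i, w i * g i) := by
    set T := fun i j => w i * (w j * f j * g j) - w i * f i * (w j * g j)
    calc ∑ i, ∑ j, w i * w j * ((f j - f i) * (g j - g i))
        = ∑ i, ∑ j, (T i j + T j i) :=
          sum_congr rfl fun i _ => sum_congr rfl fun j _ => by simp only [T]; ring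
      _ = 2 * ∑ i, ∑ j, T i j := by
          simp only [sum_add_distrib]; rw [sum_comm (f := fun i j => T j i)]; ring
      _ = _ := by simp only [T, sum_sub_distrib, sum_mul_sum]
  linarith

/-- The paper's `Sharpen(l, η)` is `sharpen l (1 / η)`. -/
noncomputable def sharpen (l : ι → ℝ) (β : ℝ) (k : ι) : ℝ :=
  l k ^ β / ∑ j, l j ^ β

theorem sum_rpow_pos [Nonempty ι] {l : ι → ℝ} (hl : ∀ k, 0 < l k) (β : ℝ) :
    0 < ∑ j, l j ^ β :=
  sum_pos (fun j _ => rpow_pos_of_pos (hl j) β) univ_nonempty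

theorem sharpen_pos [Nonempty ι] {l : ι → ℝ} (hl : ∀ k, 0 < l k) (β : ℝ) (k : ι) :
    0 < sharpen l β k :=
  div_pos (rpow_pos_of_pos (hl k) β) (sum_rpow_pos hl β)

theorem sum_sharpen [Nonempty ι] {l : ι → ℝ} (hl : ∀ k, 0 < l k) (β : ℝ) :
    ∑ k, sharpen l β k = 1 := by
  simp only [sharpen, ← sum_div]
  exact div_self (sum_rpow_pos hl β).ne'

theorem sum_mul_log_le_sum_sharpen_mul_log [Nonempty ι] {l : ι → ℝ} (hl : ∀ k, 0 < l k)
    (hsum : ∑ k, l k = 1) {β : ℝ} (hβ : 1 ≤ β) :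
    ∑ k, l k * log (l k) ≤ ∑ k, sharpen l β k * log (l k) := by
  have hmono : Monovary (fun k => l k ^ (β - 1)) (fun k => log (l k)) := fun i j hij =>
    rpow_le_rpow (hl i).le ((log_lt_log_iff (hl i) (hl j)).1 hij).le (by linarith)
  have hweight : ∀ k, l k * l k ^ (β - 1) = l k ^ β := fun k => by
    rw [rpow_sub_one (hl k).ne', mul_div_cancel₀ _ (hl k).ne']
  have hcheb := hmono.weighted_sum_mul_sum_le_sum_mul_sum fun k => (hl k).le
  simp only [hweight, hsum, one_mul] at hcheb
  simp only [sharpen, div_mul_eq_mul_div, ← sum_div]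
  rwa [le_div_iff₀ (sum_rpow_pos hl β), mul_comm]

/-- Sharpening with temperature `η ∈ (0,1)` does not increase the
Shannon entropy `H(p) = −∑ p k log p k`. -/
theorem stmt6 (c : ℕ) (l : Fin c → ℝ) (η : ℝ)
    (hpos : ∀ k, 0 < l k) (hsum : ∑ k, l k = 1) (hη : η ∈ Set.Ioo (0 : ℝ) 1) :
    -(∑ k, (l k ^ (1 / η) / ∑ j, l j ^ (1 / η)) *
        Real.log (l k ^ (1 / η) / ∑ j, l j ^ (1 / η)))
      ≤ -(∑ k, l k * Real.log (l k)) := by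
  have : Nonempty (Fin c) := by
    obtain ⟨k, -, -⟩ := exists_ne_zero_of_sum_ne_zero (hsum ▸ one_ne_zero)
    exact ⟨k⟩
  have gibbs := sum_mul_log_le_sum_mul_log hpos (sharpen_pos hpos (1 / η))
    (by rw [hsum, sum_sharpen hpos])
  have chebyshev := sum_mul_log_le_sum_sharpen_mul_log hpos hsum (one_le_one_div hη.1 hη.2.le)
  change -(∑ k, sharpen l (1 / η) k * log (sharpen l (1 / η) k)) ≤ _
  linarith
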